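/- Let f ∈ L¹(ℝ^d), f ≥ 0, and λ > 0, and suppose (1/c)g(|x|) ≤ f(x) ≤ c g(|x|) for all x ≠ 0 with g decreasing, c ≥ 1. Let p_λ(x) = e^{-λ‖f‖₁} Σ_{n≥1} (λⁿ/n!) f^{*n}(x). Then for every x ≠ 0 and every unit vector θ: p_λ(x) ≤ e^{(c²−1)λ‖f‖₁} p_{c²λ}(|x|θ). -/

import Mathlib

open Filter MeasureTheory Metric

/-- The `n`-fold convolution power of `f` (with `convPow f 1 = f`;
`convPow f 0` is set to `0` by convention and is never used). -/
noncomputable def convPow (d : ℕ) (f : EuclideanSpace ℝ (Fin d) → ℝ) :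
    ℕ → EuclideanSpace ℝ (Fin d) → ℝ
  | 0 => 0
  | 1 => f
  | n + 2 => fun x => ∫ y, convPow d f (n + 1) (x - y) * f y

/-- The compound Poisson density built on `f` with intensity `l`. -/
noncomputable def cpDensity (d : ℕ) (f : EuclideanSpace ℝ (Fin d) → ℝ) (l : ℝ)
    (x : EuclideanSpace ℝ (Fin d)) : ℝ :=
  Real.exp (-l * ∫ y, f y) *
    ∑' n : ℕ, (l ^ (n + 1) / (Nat.factorial (n + 1) : ℝ)) * convPow d f (n + 1) x

/-!
Both sides are series in the convolution powers, so it suffices to compare them term by term.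
Since `f y ≤ c² f (e y)` for every linear isometry `e` and every `y ≠ 0`, induction on `n` gives
`f^{*n}(x) ≤ c^{2n} f^{*n}(e x)`, and a reflection maps `x` to `|x|θ`; the factor `c^{2n}` is
absorbed into the Poisson weights by replacing `λ` with `c²λ`.

The comparison of the sums needs the right-hand series to converge. Comparability with a decreasing
profile bounds `f` outside the ball of radius `r` by `c² ‖f‖₁ / vol(B_r)`. Splitting the last
convolution according to `|y| ≥ r` or `|y| < r` then gives
`f^{*(n+1)}(x) ≤ (n+1) · c² ‖f‖₁^{n+1} / vol(B_r)` whenever `(n+1) r ≤ |x|`, which grows only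
polynomially in `n` for `r = |x|/(n+1)`.
-/

local notation "ℝ^" d:max => EuclideanSpace ℝ (Fin d)

section General

lemma integral_le_mul_integral_of_ae_le_of_ae_le {α : Type*} [MeasurableSpace α] {μ : Measure α}
    {φ ψ : α → ℝ} {K : ℝ} (hK : 0 ≤ K) (hψ0 : 0 ≤ᵐ[μ] ψ) (hψ : AEStronglyMeasurable ψ μ)
    (hφψ : ∀ᵐ y ∂μ, φ y ≤ K * ψ y) (hψφ : ∀ᵐ y ∂μ, ψ y ≤ K * φ y) :
    ∫ y, φ y ∂μ ≤ K * ∫ y, ψ y ∂μ := by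
  by_cases hφ : Integrable φ μ
  · have hψi : Integrable ψ μ := (hφ.const_mul K).mono' hψ <| by
      filter_upwards [hψ0, hψφ] with y h0 h
      rwa [Real.norm_eq_abs, abs_of_nonneg h0]
    calc ∫ y, φ y ∂μ ≤ ∫ y, K * ψ y ∂μ := integral_mono_ae hφ (hψi.const_mul K) hφψ
      _ = K * ∫ y, ψ y ∂μ := integral_const_mul K _
  · rw [integral_undef hφ]
    exact mul_nonneg hK (integral_nonneg_of_ae hψ0)

lemma summable_pow_div_factorial_mul_of_le {a : ℕ → ℝ} {l C t : ℝ} (k : ℕ) (hl : 0 ≤ l)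
    (hC : 0 ≤ C) (ht : 0 ≤ t) (ha0 : ∀ n, 0 ≤ a n)
    (ha : ∀ n : ℕ, a n ≤ C * ((n : ℝ) + 1) ^ k * t ^ (n + 1)) :
    Summable fun n : ℕ => l ^ (n + 1) / ((n + 1).factorial : ℝ) * a n := by
  have hexp : Summable fun n : ℕ =>
      C * k.factorial * ((Real.exp 1 * l * t) ^ (n + 1) / ((n + 1).factorial : ℝ)) :=
    ((summable_nat_add_iff 1).2 (Real.summable_pow_div_factorial _)).mul_left _
  refine hexp.of_nonneg_of_le (fun n => mul_nonneg (by positivity) (ha0 n)) fun n => ?_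
  -- `(n + 1)^k / k! ≤ exp (n + 1)`, a single term of the exponential series
  have hpoly : ((n : ℝ) + 1) ^ k ≤ k.factorial * Real.exp 1 ^ (n + 1) := by
    have h := Real.pow_div_factorial_le_exp (x := (n : ℝ) + 1) (by positivity) k
    rw [div_le_iff₀ (by positivity)] at h
    rw [← Real.exp_nat_mul, mul_one]
    push_cast
    linarith
  calc l ^ (n + 1) / ((n + 1).factorial : ℝ) * a n
      ≤ l ^ (n + 1) / ((n + 1).factorial : ℝ) * (C * ((n : ℝ) + 1) ^ k * t ^ (n + 1)) :=
        mul_le_mul_of_nonneg_left (ha n) (by positivity)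
    _ ≤ l ^ (n + 1) / ((n + 1).factorial : ℝ) *
          (C * (k.factorial * Real.exp 1 ^ (n + 1)) * t ^ (n + 1)) := by gcongr
    _ = C * k.factorial * ((Real.exp 1 * l * t) ^ (n + 1) / ((n + 1).factorial : ℝ)) := by
        ring

end General

section ConvPow

variable {d : ℕ} {f : ℝ^d → ℝ}

lemma convPow_succ_succ_apply (n : ℕ) (x : ℝ^d) :
    convPow d f (n + 2) x = ∫ y, convPow d f (n + 1) (x - y) * f y := rfl

lemma convPow_nonneg (hf0 : ∀ x, 0 ≤ f x) : ∀ n x, 0 ≤ convPow d f n x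
  | 0, _ => le_rfl
  | 1, x => hf0 x
  | n + 2, _ => integral_nonneg fun y => mul_nonneg (convPow_nonneg hf0 (n + 1) _) (hf0 y)

lemma convPow_succ_succ_eq_convolution (n : ℕ) :
    convPow d f (n + 2) = convolution f (convPow d f (n + 1)) (ContinuousLinearMap.mul ℝ ℝ) := by
  ext x
  simp only [convPow_succ_succ_apply, convolution_def, ContinuousLinearMap.mul_apply', mul_comm]

lemma integrable_convPow (hf : Integrable f) : ∀ n, Integrable (convPow d f (n + 1))
  | 0 => hf
  | n + 1 => by
    rw [convPow_succ_succ_eq_convolution]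
    exact hf.integrable_convolution _ (integrable_convPow hf n)

lemma integral_convPow (hf : Integrable f) :
    ∀ n, ∫ x, convPow d f (n + 1) x = (∫ x, f x) ^ (n + 1)
  | 0 => (pow_one _).symm
  | n + 1 => by
    rw [convPow_succ_succ_eq_convolution, integral_convolution _ hf (integrable_convPow hf n),
      integral_convPow hf n, ContinuousLinearMap.mul_apply', pow_succ' _ (n + 1)]

lemma convPow_le_of_le_off_ball (hf : Integrable f) (hf0 : ∀ x, 0 ≤ f x) {r M : ℝ}
    (hM : 0 ≤ M) (hfM : ∀ y, r ≤ ‖y‖ → f y ≤ M) (n : ℕ) :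
    ∀ x, ((n : ℝ) + 1) * r ≤ ‖x‖ →
      convPow d f (n + 1) x ≤ ((n : ℝ) + 1) * M * (∫ y, f y) ^ n := by
  induction n with
  | zero =>
    intro x hx
    simp only [CharP.cast_eq_zero, zero_add, one_mul, pow_zero, mul_one] at hx ⊢
    exact hfM x hx
  | succ n ih =>
    intro x hx
    set I := ∫ y, f y
    set F := convPow d f (n + 1)
    have hF0 : ∀ z, 0 ≤ F z := convPow_nonneg hf0 _
    have hFint : Integrable fun y => F (x - y) := (integrable_convPow hf n).comp_sub_left x
    have hpointwise : ∀ y,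
        F (x - y) * f y ≤ M * F (x - y) + ((n : ℝ) + 1) * M * I ^ n * f y := by
      intro y
      have hnI : 0 ≤ ((n : ℝ) + 1) * M * I ^ n * f y := by
        have : 0 ≤ I := integral_nonneg hf0
        have := hf0 y
        positivity
      by_cases hy : r ≤ ‖y‖
      · nlinarith [hfM y hy, hF0 (x - y)]
      · have hxy : ((n : ℝ) + 1) * r ≤ ‖x - y‖ := by
          have := norm_sub_norm_le x y
          push_cast at hx
          linarith
        nlinarith [ih (x - y) hxy, hf0 y, mul_nonneg hM (hF0 (x - y))]
    calc convPow d f (n + 2) x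
        ≤ ∫ y, M * F (x - y) + ((n : ℝ) + 1) * M * I ^ n * f y :=
          integral_mono_of_nonneg (.of_forall fun y => mul_nonneg (hF0 _) (hf0 y))
            ((hFint.const_mul M).add (hf.const_mul _)) (.of_forall hpointwise)
      _ = ((n + 1 : ℕ) + 1) * M * I ^ (n + 1) := by
          rw [integral_add (hFint.const_mul M) (hf.const_mul _), integral_const_mul,
            integral_const_mul, integral_sub_left_eq_self F volume x, integral_convPow hf n]
          push_cast
          ring

lemma integral_sub_mul_le_mul_integral_sub_mul_linearIsometryEquiv [Nontrivial (ℝ^d)]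
    (hf : Integrable f) (hf0 : ∀ x, 0 ≤ f x) {F : ℝ^d → ℝ} (hF : Integrable F)
    (hF0 : ∀ x, 0 ≤ F x) {K L : ℝ} (hK : 0 ≤ K) (hL : 0 ≤ L)
    (hfe : ∀ (e : ℝ^d ≃ₗᵢ[ℝ] ℝ^d) y, y ≠ 0 → f y ≤ K * f (e y))
    (hFe : ∀ (e : ℝ^d ≃ₗᵢ[ℝ] ℝ^d) y, y ≠ 0 → F y ≤ L * F (e y))
    (e : ℝ^d ≃ₗᵢ[ℝ] ℝ^d) (x : ℝ^d) :
    ∫ y, F (x - y) * f y ≤ L * K * ∫ y, F (e x - y) * f y := by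
  have hprod : ∀ (e : ℝ^d ≃ₗᵢ[ℝ] ℝ^d) u v, u ≠ 0 → v ≠ 0 →
      F u * f v ≤ L * K * (F (e u) * f (e v)) := fun e u v hu hv =>
    calc F u * f v ≤ (L * F (e u)) * (K * f (e v)) :=
          mul_le_mul (hFe e u hu) (hfe e v hv) (hf0 v) (mul_nonneg hL (hF0 _))
      _ = L * K * (F (e u) * f (e v)) := by ring
  have hae : ∀ᵐ y : ℝ^d, y ≠ 0 ∧ x - y ≠ 0 := by
    filter_upwards [volume.ae_ne 0, volume.ae_ne x] with y h0 hxy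
    exact ⟨h0, sub_ne_zero.mpr (Ne.symm hxy)⟩
  set ψ : ℝ^d → ℝ := fun y => F (e x - y) * f y
  have hψe : ∀ y, ψ (e y) = F (e (x - y)) * f (e y) := fun y => by simp [ψ, map_sub]
  have hψ : AEStronglyMeasurable ψ :=
    (hF.comp_sub_left (e x)).aestronglyMeasurable.mul hf.aestronglyMeasurable
  have hmp := e.measurePreserving
  rw [← hmp.integral_comp e.toHomeomorph.measurableEmbedding ψ]
  refine integral_le_mul_integral_of_ae_le_of_ae_le (mul_nonneg hL hK)
    (.of_forall fun y => mul_nonneg (hF0 _) (hf0 _))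
    (hψ.comp_quasiMeasurePreserving hmp.quasiMeasurePreserving) ?_ ?_
  · filter_upwards [hae] with y ⟨hy, hxy⟩
    rw [hψe]
    exact hprod e _ _ hxy hy
  · filter_upwards [hae] with y ⟨hy, hxy⟩
    have h := hprod e.symm (e (x - y)) (e y) (e.map_ne_zero_iff.2 hxy) (e.map_ne_zero_iff.2 hy)
    rwa [e.symm_apply_apply, e.symm_apply_apply, ← hψe] at h

lemma convPow_le_pow_mul_convPow_linearIsometryEquiv (hf : Integrable f) (hf0 : ∀ x, 0 ≤ f x)
    {K : ℝ} (hK : 0 ≤ K) (hfe : ∀ (e : ℝ^d ≃ₗᵢ[ℝ] ℝ^d) y, y ≠ 0 → f y ≤ K * f (e y)) (n : ℕ) :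
    ∀ (e : ℝ^d ≃ₗᵢ[ℝ] ℝ^d) x, x ≠ 0 →
      convPow d f (n + 1) x ≤ K ^ (n + 1) * convPow d f (n + 1) (e x) := by
  induction n with
  | zero =>
    intro e x hx
    rw [zero_add, pow_one]
    exact hfe e x hx
  | succ n ih =>
    intro e x hx
    have := nontrivial_of_ne x 0 hx
    calc convPow d f (n + 2) x ≤ K ^ (n + 1) * K * convPow d f (n + 2) (e x) :=
          integral_sub_mul_le_mul_integral_sub_mul_linearIsometryEquiv hf hf0
            (integrable_convPow hf n) (convPow_nonneg hf0 _) hK (pow_nonneg hK _) hfe ih e x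
      _ = K ^ (n + 2) * convPow d f (n + 2) (e x) := by ring

lemma cpDensity_le_exp_mul_cpDensity_mul (hf0 : ∀ x, 0 ≤ f x) {l K : ℝ} (hl : 0 ≤ l)
    {x x' : ℝ^d}
    (hle : ∀ n, convPow d f (n + 1) x ≤ K ^ (n + 1) * convPow d f (n + 1) x')
    (hsum : Summable fun n : ℕ =>
      (K * l) ^ (n + 1) / ((n + 1).factorial : ℝ) * convPow d f (n + 1) x') :
    cpDensity d f l x ≤ Real.exp ((K - 1) * l * ∫ y, f y) * cpDensity d f (K * l) x' := by
  have hterm : ∀ n : ℕ, l ^ (n + 1) / ((n + 1).factorial : ℝ) * convPow d f (n + 1) x ≤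
      (K * l) ^ (n + 1) / ((n + 1).factorial : ℝ) * convPow d f (n + 1) x' := fun n =>
    calc _ ≤ l ^ (n + 1) / ((n + 1).factorial : ℝ) * (K ^ (n + 1) * convPow d f (n + 1) x') := by
          gcongr
          exact hle n
      _ = _ := by ring
  have hsum_le := hsum.of_nonneg_of_le
    (fun n => mul_nonneg (by positivity) (convPow_nonneg hf0 _ x)) hterm
  calc cpDensity d f l x
      ≤ Real.exp (-l * ∫ y, f y) *
          ∑' n : ℕ, (K * l) ^ (n + 1) / ((n + 1).factorial : ℝ) * convPow d f (n + 1) x' :=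
        mul_le_mul_of_nonneg_left (hsum_le.tsum_le_tsum hterm hsum) (Real.exp_nonneg _)
    _ = _ := by
      rw [cpDensity, ← mul_assoc, ← Real.exp_add]
      ring_nf

lemma mul_volume_real_closedBall_le_integral [Nontrivial (ℝ^d)] (hf : Integrable f)
    (hf0 : ∀ x, 0 ≤ f x) {m r : ℝ} (hm : ∀ y, y ≠ 0 → ‖y‖ ≤ r → m ≤ f y) :
    m * volume.real (closedBall (0 : ℝ^d) r) ≤ ∫ y, f y := by
  set s := closedBall (0 : ℝ^d) r \ {0}
  have hs_vol : volume.real s = volume.real (closedBall (0 : ℝ^d) r) := by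
    rw [measureReal_def, measureReal_def, measure_sdiff_null (measure_singleton 0)]
  rw [← hs_vol]
  calc m * volume.real s ≤ ∫ y in s, f y :=
        setIntegral_ge_of_const_le_real (measurableSet_closedBall.diff (measurableSet_singleton 0))
          ((measure_mono Set.sdiff_subset).trans_lt measure_closedBall_lt_top).ne
          (fun y ⟨hyr, hy0⟩ => hm y hy0 (mem_closedBall_zero_iff.1 hyr)) hf.integrableOn
    _ ≤ ∫ y, f y := setIntegral_le_integral hf (.of_forall hf0)

def IsRadiallyComparable (f : ℝ^d → ℝ) (g : ℝ → ℝ) (c : ℝ) : Prop :=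
  ∀ x, x ≠ 0 → (1 / c) * g ‖x‖ ≤ f x ∧ f x ≤ c * g ‖x‖

variable {g : ℝ → ℝ} {c : ℝ}

lemma IsRadiallyComparable.le_sq_mul_apply (hcomp : IsRadiallyComparable f g c) (hc : 0 < c)
    (e : ℝ^d ≃ₗᵢ[ℝ] ℝ^d) {y : ℝ^d} (hy : y ≠ 0) : f y ≤ c ^ 2 * f (e y) := by
  have h := (hcomp (e y) (e.map_ne_zero_iff.2 hy)).1
  rw [e.norm_map] at h
  calc f y ≤ c * g ‖y‖ := (hcomp y hy).2
    _ = c ^ 2 * (1 / c * g ‖y‖) := by field_simp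
    _ ≤ c ^ 2 * f (e y) := by gcongr

lemma IsRadiallyComparable.le_sq_mul_integral_div_volume_real_closedBall [Nontrivial (ℝ^d)]
    (hcomp : IsRadiallyComparable f g c) (hf : Integrable f) (hf0 : ∀ x, 0 ≤ f x)
    (hg : AntitoneOn g (Set.Ioi 0)) (hc : 0 < c) {r : ℝ} (hr : 0 < r) {y : ℝ^d}
    (hy : r ≤ ‖y‖) : f y ≤ c ^ 2 * (∫ z, f z) / volume.real (closedBall (0 : ℝ^d) r) := by
  have hvol : 0 < volume.real (closedBall (0 : ℝ^d) r) :=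
    ENNReal.toReal_pos (measure_closedBall_pos volume 0 hr).ne' measure_closedBall_lt_top.ne
  have hlower : g r / c * volume.real (closedBall (0 : ℝ^d) r) ≤ ∫ z, f z :=
    mul_volume_real_closedBall_le_integral hf hf0 fun z hz hzr =>
      calc g r / c ≤ 1 / c * g ‖z‖ := by
            rw [one_div_mul_eq_div]
            gcongr
            exact hg (norm_pos_iff.2 hz) hr hzr
        _ ≤ f z := (hcomp z hz).1
  rw [le_div_iff₀ hvol]
  calc f y * volume.real (closedBall (0 : ℝ^d) r)
      ≤ c * g r * volume.real (closedBall (0 : ℝ^d) r) := by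
        gcongr
        calc f y ≤ c * g ‖y‖ := (hcomp y (norm_pos_iff.1 (hr.trans_le hy))).2
          _ ≤ c * g r := by gcongr; exact hg hr (hr.trans_le hy) hy
    _ = c ^ 2 * (g r / c * volume.real (closedBall (0 : ℝ^d) r)) := by field_simp
    _ ≤ c ^ 2 * ∫ z, f z := by gcongr

lemma IsRadiallyComparable.summable_cpDensity_series (hcomp : IsRadiallyComparable f g c)
    (hf : Integrable f) (hf0 : ∀ x, 0 ≤ f x) (hg : AntitoneOn g (Set.Ioi 0)) (hc : 0 < c)
    {l : ℝ} (hl : 0 ≤ l) {x : ℝ^d} (hx : x ≠ 0) :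
    Summable fun n : ℕ => l ^ (n + 1) / ((n + 1).factorial : ℝ) * convPow d f (n + 1) x := by
  have := nontrivial_of_ne x 0 hx
  set I := ∫ y, f y
  have hI : 0 ≤ I := integral_nonneg hf0
  set B := volume.real (ball (0 : ℝ^d) 1)
  have hB : 0 < B :=
    ENNReal.toReal_pos (measure_ball_pos volume 0 one_pos).ne' measure_ball_lt_top.ne
  have hx0 : 0 < ‖x‖ := norm_pos_iff.2 hx
  refine summable_pow_div_factorial_mul_of_le (C := c ^ 2 / (‖x‖ ^ d * B)) (d + 1) hl
    (by positivity) hI (fun n => convPow_nonneg hf0 _ x) fun n => ?_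
  set r := ‖x‖ / ((n : ℝ) + 1)
  have hr : 0 < r := by positivity
  have hvol : volume.real (closedBall (0 : ℝ^d) r) = r ^ d * B := by
    rw [Measure.addHaar_real_closedBall volume 0 hr.le, finrank_euclideanSpace_fin]
  calc convPow d f (n + 1) x ≤ ((n : ℝ) + 1) * (c ^ 2 * I / (r ^ d * B)) * I ^ n :=
        convPow_le_of_le_off_ball hf hf0 (by positivity)
          (fun y hy => hvol ▸
            hcomp.le_sq_mul_integral_div_volume_real_closedBall hf hf0 hg hc hr hy)
          n x (by simp only [r]; field_simp; rfl)
    _ = c ^ 2 / (‖x‖ ^ d * B) * ((n : ℝ) + 1) ^ (d + 1) * I ^ (n + 1) := by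
      simp only [r]
      rw [div_pow]
      field_simp
      ring

end ConvPow

theorem stmt17_general (d : ℕ) (f : EuclideanSpace ℝ (Fin d) → ℝ)
    (hfint : Integrable f) (hf0 : ∀ x, 0 ≤ f x) (l : ℝ) (hl : 0 < l)
    (g : ℝ → ℝ)
    (hgdec : ∀ s t : ℝ, 0 < s → s ≤ t → g t ≤ g s)
    (c : ℝ) (hc : 1 ≤ c)
    (hcomp : ∀ x : EuclideanSpace ℝ (Fin d), x ≠ 0 →
      (1 / c) * g ‖x‖ ≤ f x ∧ f x ≤ c * g ‖x‖) :
    ∀ x : EuclideanSpace ℝ (Fin d), x ≠ 0 →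
      ∀ θ : EuclideanSpace ℝ (Fin d), ‖θ‖ = 1 →
        cpDensity d f l x ≤
          Real.exp ((c ^ 2 - 1) * l * ∫ y, f y) * cpDensity d f (c ^ 2 * l) (‖x‖ • θ) := by
  intro x hx θ hθ
  have hc0 : 0 < c := one_pos.trans_le hc
  have hnorm : ‖‖x‖ • θ‖ = ‖x‖ := by simp [norm_smul, hθ]
  have hx' : ‖x‖ • θ ≠ 0 := by
    rw [← norm_ne_zero_iff, hnorm]
    exact norm_ne_zero_iff.2 hx
  have hrad : IsRadiallyComparable f g c := hcomp
  refine cpDensity_le_exp_mul_cpDensity_mul hf0 hl.le (fun n => ?_)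
    (hrad.summable_cpDensity_series hfint hf0 (fun s hs t _ hst => hgdec s t hs hst) hc0
      (by positivity) hx')
  have h := convPow_le_pow_mul_convPow_linearIsometryEquiv hfint hf0 (sq_nonneg c)
    (fun e y hy => hrad.le_sq_mul_apply hc0 e hy) n
    (Submodule.reflection (ℝ ∙ (x - ‖x‖ • θ))ᗮ) x hx
  rwa [Submodule.reflection_sub hnorm.symm] at h

theorem stmt17 (d : ℕ) (f : EuclideanSpace ℝ (Fin d) → ℝ)
    (hfint : Integrable f) (hf0 : ∀ x, 0 ≤ f x) (l : ℝ) (hl : 0 < l)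
    (g : ℝ → ℝ) (hgpos : ∀ r : ℝ, 0 < r → 0 < g r)
    (hgdec : ∀ s t : ℝ, 0 < s → s ≤ t → g t ≤ g s)
    (c : ℝ) (hc : 1 ≤ c)
    (hcomp : ∀ x : EuclideanSpace ℝ (Fin d), x ≠ 0 →
      (1 / c) * g ‖x‖ ≤ f x ∧ f x ≤ c * g ‖x‖) :
    ∀ x : EuclideanSpace ℝ (Fin d), x ≠ 0 →
      ∀ θ : EuclideanSpace ℝ (Fin d), ‖θ‖ = 1 →
        cpDensity d f l x ≤
          Real.exp ((c ^ 2 - 1) * l * ∫ y, f y) * cpDensity d f (c ^ 2 * l) (‖x‖ • θ) :=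
  stmt17_general d f hfint hf0 l hl g hgdec c hc hcomp
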